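/- arXiv:2005.05797 — 2 statements merged into one kernel-verified Lean document; each statement's English description precedes it below -/
import Mathlib

section
/- Let μ be a finite nonnegative Borel measure on ℝ. Then the singular part μ_s of μ (with respect to Lebesgue measure) is carried by the set S_μ = {x ∈ ℝ : lim_{n→∞} μ(x + i 2^{-n}) = +∞}, i.e., μ_s(ℝ \ S_μ) = 0, where μ(z) denotes the Poisson extension of μ. -/
/-!
Averaging the Poisson kernel over the ball `[x - y, x + y]`, where it is at least `1 / (2y)`, gives
`μ(x + iy) ≥ μ_s(B(x, y)) / (2πy)`. By the Besicovitch differentiation theorem, since Lebesgue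
measure is singular with respect to `μ_s`, the ratio `μ_s(B(x, r)) / |B(x, r)|` tends to `∞` as
`r → 0⁺` for `μ_s`-almost every `x`; along `r = 2⁻ⁿ` this forces `μ(x + i 2⁻ⁿ) → ∞`.
-/

open MeasureTheory Filter Metric Set Topology ENNReal

/-- The Poisson extension of a measure `μ` on `ℝ` at the point `x + iy` of the upper
half-plane. -/
noncomputable def poissonExt (μ : Measure ℝ) (x y : ℝ) : ℝ :=
  (1 / Real.pi) * ∫ s, y / ((s - x) ^ 2 + y ^ 2) ∂μ

section PoissonKernel

variable {μ ν : Measure ℝ} {y : ℝ}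

theorem poissonKernel_nonneg (x s : ℝ) (hy : 0 < y) : 0 ≤ y / ((s - x) ^ 2 + y ^ 2) := by
  positivity

theorem integrable_poissonKernel [IsFiniteMeasure μ] (x : ℝ) (hy : 0 < y) :
    Integrable (fun s => y / ((s - x) ^ 2 + y ^ 2)) μ := by
  have hcont : Continuous fun s => y / ((s - x) ^ 2 + y ^ 2) :=
    continuous_const.div (by fun_prop) fun s => by positivity
  refine ⟨hcont.aestronglyMeasurable, HasFiniteIntegral.of_bounded (C := 1 / y) ?_⟩
  filter_upwards with s
  rw [Real.norm_of_nonneg (poissonKernel_nonneg x s hy), div_le_div_iff₀ (by positivity) hy]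
  nlinarith [sq_nonneg (s - x)]

theorem poissonExt_mono [IsFiniteMeasure μ] (hνμ : ν ≤ μ) (x : ℝ) (hy : 0 < y) :
    poissonExt ν x y ≤ poissonExt μ x y := by
  refine mul_le_mul_of_nonneg_left ?_ (by positivity)
  exact integral_mono_measure hνμ (.of_forall fun s => poissonKernel_nonneg x s hy)
    (integrable_poissonKernel x hy)

theorem inv_pi_mul_measureReal_closedBall_div_le_poissonExt [IsFiniteMeasure μ] (x : ℝ)
    (hy : 0 < y) : Real.pi⁻¹ * (μ.real (closedBall x y) / (2 * y)) ≤ poissonExt μ x y := by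
  have kernel_ge : ∀ s ∈ closedBall x y, 1 / (2 * y) ≤ y / ((s - x) ^ 2 + y ^ 2) := by
    intro s hs
    rw [mem_closedBall, Real.dist_eq, ← sq_le_sq₀ (abs_nonneg _) hy.le, sq_abs] at hs
    rw [div_le_div_iff₀ (by positivity) (by positivity)]
    nlinarith
  have hint := integrable_poissonKernel (μ := μ) x hy
  calc Real.pi⁻¹ * (μ.real (closedBall x y) / (2 * y))
      = Real.pi⁻¹ * (1 / (2 * y) * μ.real (closedBall x y)) := by ring
    _ ≤ Real.pi⁻¹ * ∫ s in closedBall x y, y / ((s - x) ^ 2 + y ^ 2) ∂μ := by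
      refine mul_le_mul_of_nonneg_left ?_ (by positivity)
      exact setIntegral_ge_of_const_le_real measurableSet_closedBall (measure_ne_top μ _)
        kernel_ge hint.integrableOn
    _ ≤ poissonExt μ x y := by
      rw [poissonExt, one_div]
      refine mul_le_mul_of_nonneg_left ?_ (by positivity)
      exact setIntegral_le_integral hint (.of_forall fun s => poissonKernel_nonneg x s hy)

end PoissonKernel

theorem ae_tendsto_measure_closedBall_div_of_mutuallySingular {α : Type*} [MetricSpace α]
    [MeasurableSpace α] [BorelSpace α] [SecondCountableTopology α] [ProperSpace α]
    [HasBesicovitchCovering α] {μ ν : Measure α} [IsLocallyFiniteMeasure μ] [μ.IsOpenPosMeasure]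
    [IsLocallyFiniteMeasure ν] (h : μ ⟂ₘ ν) :
    ∀ᵐ x ∂ν, Tendsto (fun r => ν (closedBall x r) / μ (closedBall x r)) (𝓝[>] 0) (𝓝 ∞) := by
  filter_upwards [(Besicovitch.vitaliFamily ν).ae_eventually_measure_zero_of_singular h] with x hx
  have hinv := (hx.comp (Besicovitch.tendsto_filterAt ν x)).inv
  rw [ENNReal.inv_zero] at hinv
  refine hinv.congr' ?_
  filter_upwards [self_mem_nhdsWithin] with r (hr : 0 < r)
  exact ENNReal.inv_div (.inr measure_closedBall_lt_top.ne) (.inr (measure_closedBall_pos μ x hr).ne')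

theorem tendsto_measureReal_closedBall_div_atTop {ν : Measure ℝ} [IsFiniteMeasure ν] {x : ℝ}
    (h : Tendsto (fun r => ν (closedBall x r) / volume (closedBall x r)) (𝓝[>] 0) (𝓝 ∞)) :
    Tendsto (fun r => ν.real (closedBall x r) / (2 * r)) (𝓝[>] 0) atTop := by
  rw [← ENNReal.tendsto_ofReal_nhds_top]
  refine h.congr' ?_
  filter_upwards [self_mem_nhdsWithin] with r (hr : 0 < r)
  rw [Real.volume_closedBall, ENNReal.ofReal_div_of_pos (by positivity), ofReal_measureReal]

/-- The singular part (w.r.t. Lebesgue measure) of a finite Borel measure `μ` on `ℝ` is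
carried by the set where the Poisson extension `μ(x + i 2⁻ⁿ)` tends to `+∞`. -/
theorem stmt6 (μ : Measure ℝ) [IsFiniteMeasure μ] :
    μ.singularPart volume
      {x : ℝ | ¬ Tendsto (fun n : ℕ => poissonExt μ x (((2 : ℝ) ^ n)⁻¹)) atTop atTop}
      = 0 := by
  have h_two_pow_inv : Tendsto (fun n : ℕ => ((2 : ℝ) ^ n)⁻¹) atTop (𝓝[>] 0) :=
    tendsto_inv_atTop_nhdsGT_zero.comp (tendsto_pow_atTop_atTop_of_one_lt one_lt_two)
  have hblowup := ae_tendsto_measure_closedBall_div_of_mutuallySingular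
    (Measure.mutuallySingular_singularPart μ volume).symm
  refine measure_mono_null ?_ (ae_iff.1 hblowup)
  intro x hx hdiff
  apply hx
  refine tendsto_atTop_mono (fun n => ?_)
    (((tendsto_measureReal_closedBall_div_atTop hdiff).comp h_two_pow_inv).const_mul_atTop
      (inv_pos.2 Real.pi_pos))
  exact (inv_pi_mul_measureReal_closedBall_div_le_poissonExt x (by positivity)).trans
    (poissonExt_mono (Measure.singularPart_le μ volume) x (by positivity))
end

section
/- Let μ and ν be finite nonnegative Borel measures on ℝ with dν = w dμ for some w ∈ L¹(μ), and let y_n = 2^{-n}. Then lim_{n→∞} ν(x + i y_n)/μ(x + i y_n) = w(x) for μ-almost every x ∈ ℝ, where μ(z), ν(z) denote Poisson extensions. -/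
/-!
Write `K_y(s) = y / ((s - x) ^ 2 + y ^ 2)`. The ratio of Poisson extensions is
`∫ w K_y dμ / ∫ K_y dμ`, whose distance to `w x` is at most `∫ |w - w x| K_y dμ / ∫ K_y dμ`.
The superlevel sets of `K_y` are closed balls about `x`, so by the layer-cake formula the levels
of `K_y` above `K_y(x + r₀)` contribute at most `δ ∫ K_y dμ` to this numerator as soon as
`|w - w x|` has `μ`-average at most `δ` on every ball `B(x, r)` with `r ≤ r₀`; this holds at the
Lebesgue points of `w` (Besicovitch differentiation). The lower levels contribute at most
`(y / r₀²) ∫ |w - w x| dμ`. At `μ`-a.e. `x` Lebesgue measure is dominated by `μ` on small balls,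
`2r ≤ M μ(B(x, r))`, and since `K_y ≥ 1 / (2y)` on `B(x, y)` this gives `∫ K_y dμ ≥ 1 / M`.
So the error is at most `δ + O(y)`, and the ratio tends to `w x` as `y → 0⁺`.
-/

open MeasureTheory Filter

open Set Metric Topology

/-- `π` times the Poisson kernel of the upper half-plane at `x + iy`; the factor `1 / π` cancels
in ratios of Poisson extensions. -/
noncomputable def halfPlanePoissonKernel (x y s : ℝ) : ℝ := y / ((s - x) ^ 2 + y ^ 2)

section HalfPlanePoissonKernel

variable {x y : ℝ}

lemma halfPlanePoissonKernel_pos (hy : 0 < y) (s : ℝ) : 0 < halfPlanePoissonKernel x y s := by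
  unfold halfPlanePoissonKernel; positivity

lemma halfPlanePoissonKernel_le (hy : 0 < y) (s : ℝ) : halfPlanePoissonKernel x y s ≤ y⁻¹ :=
  calc halfPlanePoissonKernel x y s ≤ y / y ^ 2 := by
        unfold halfPlanePoissonKernel; gcongr; exact le_add_of_nonneg_left (sq_nonneg _)
    _ = y⁻¹ := by field_simp

lemma continuous_halfPlanePoissonKernel (hy : 0 < y) :
    Continuous (halfPlanePoissonKernel x y) :=
  continuous_const.div (by fun_prop) fun s => by positivity

lemma norm_halfPlanePoissonKernel_le (hy : 0 < y) (s : ℝ) :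
    ‖halfPlanePoissonKernel x y s‖ ≤ y⁻¹ := by
  rw [Real.norm_of_nonneg (halfPlanePoissonKernel_pos hy s).le]
  exact halfPlanePoissonKernel_le hy s

lemma integrable_halfPlanePoissonKernel (μ : Measure ℝ) [IsFiniteMeasure μ] (hy : 0 < y) :
    Integrable (halfPlanePoissonKernel x y) μ :=
  .of_bound (continuous_halfPlanePoissonKernel hy).aestronglyMeasurable y⁻¹
    (.of_forall (norm_halfPlanePoissonKernel_le hy))

lemma MeasureTheory.Integrable.mul_halfPlanePoissonKernel {μ : Measure ℝ} {f : ℝ → ℝ}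
    (hf : Integrable f μ) (hy : 0 < y) :
    Integrable (fun s => f s * halfPlanePoissonKernel x y s) μ :=
  hf.mul_bdd (continuous_halfPlanePoissonKernel hy).aestronglyMeasurable
    (.of_forall (norm_halfPlanePoissonKernel_le hy))

lemma inv_two_mul_le_halfPlanePoissonKernel (hy : 0 < y) {s : ℝ} (hs : s ∈ closedBall x y) :
    (2 * y)⁻¹ ≤ halfPlanePoissonKernel x y s := by
  have hs' : (s - x) ^ 2 ≤ y ^ 2 := by
    rw [mem_closedBall, Real.dist_eq] at hs
    exact sq_le_sq' (abs_le.1 hs).1 (abs_le.1 hs).2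
  calc (2 * y)⁻¹ = y / (y ^ 2 + y ^ 2) := by field_simp; ring
    _ ≤ halfPlanePoissonKernel x y s := by unfold halfPlanePoissonKernel; gcongr

lemma setOf_le_halfPlanePoissonKernel_eq_closedBall (hy : 0 < y) {t : ℝ} (ht : 0 < t)
    (hty : t ≤ y⁻¹) :
    {s | t ≤ halfPlanePoissonKernel x y s} = closedBall x √(y / t - y ^ 2) := by
  have hR : 0 ≤ y / t - y ^ 2 := by
    rw [sub_nonneg, le_div_iff₀ ht]
    calc y ^ 2 * t ≤ y ^ 2 * y⁻¹ := by gcongr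
      _ = y := by field_simp
  ext s
  rw [mem_ofPred_eq, mem_closedBall, Real.dist_eq, Real.le_sqrt (abs_nonneg _) hR, sq_abs,
    halfPlanePoissonKernel, le_div_iff₀ (by positivity), le_sub_iff_add_le, le_div_iff₀' ht]

lemma setOf_le_halfPlanePoissonKernel_eq_empty (hy : 0 < y) {t : ℝ} (ht : y⁻¹ < t) :
    {s | t ≤ halfPlanePoissonKernel x y s} = ∅ :=
  eq_empty_of_forall_notMem fun s hs =>
    absurd hs (not_le.2 ((halfPlanePoissonKernel_le hy s).trans_lt ht))

end HalfPlanePoissonKernel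

lemma integral_withDensity_ofReal {α : Type*} [MeasurableSpace α] {μ : Measure α} {g : α → ℝ}
    (hg : AEMeasurable g μ) (hg0 : 0 ≤ᵐ[μ] g) (f : α → ℝ) :
    ∫ s, f s ∂μ.withDensity (fun s => ENNReal.ofReal (g s)) = ∫ s, g s * f s ∂μ := by
  rw [integral_withDensity_eq_integral_toReal_smul₀ hg.ennreal_ofReal
    (.of_forall fun _ => ENNReal.ofReal_lt_top)]
  refine integral_congr_ae (hg0.mono fun s hs => ?_)
  simp only [ENNReal.toReal_ofReal hs, smul_eq_mul]

lemma lintegral_halfPlanePoissonKernel_le_of_measure_closedBall_le (μ ρ : Measure ℝ)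
    {x y r₀ : ℝ} {ε : ENNReal} (hy : 0 < y) (hr₀ : 0 ≤ r₀)
    (H : ∀ r ∈ Icc 0 r₀, ρ (closedBall x r) ≤ ε * μ (closedBall x r)) :
    ∫⁻ s, ENNReal.ofReal (halfPlanePoissonKernel x y s) ∂ρ ≤
      ε * ∫⁻ s, ENNReal.ofReal (halfPlanePoissonKernel x y s) ∂μ +
        ENNReal.ofReal (y / (r₀ ^ 2 + y ^ 2)) * ρ univ := by
  set K := halfPlanePoissonKernel x y
  -- `t₀` is the value of `K` on the sphere of radius `r₀`: higher levels of `K` are balls of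
  -- radius at most `r₀`, lower levels are bounded by `ρ univ`.
  set t₀ := y / (r₀ ^ 2 + y ^ 2)
  have ht₀ : 0 < t₀ := by positivity
  have hlayer (ν : Measure ℝ) :
      ∫⁻ s, ENNReal.ofReal (K s) ∂ν = ∫⁻ t in Ioi 0, ν {s | t ≤ K s} :=
    lintegral_eq_lintegral_meas_le ν (.of_forall fun s => (halfPlanePoissonKernel_pos hy s).le)
      (continuous_halfPlanePoissonKernel hy).aemeasurable
  have hsuper : ∀ t ∈ Ioi t₀, ρ {s | t ≤ K s} ≤ ε * μ {s | t ≤ K s} := by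
    intro t ht
    rcases lt_or_ge y⁻¹ t with hyt | hyt
    · simp [K, setOf_le_halfPlanePoissonKernel_eq_empty hy hyt]
    rw [setOf_le_halfPlanePoissonKernel_eq_closedBall hy (ht₀.trans ht) hyt]
    refine H _ ⟨Real.sqrt_nonneg _, (Real.sqrt_le_sqrt ?_).trans_eq (Real.sqrt_sq hr₀)⟩
    have : y / t ≤ y / t₀ := div_le_div_of_nonneg_left hy.le ht₀ (le_of_lt ht)
    rw [div_div_cancel₀ hy.ne'] at this
    linarith
  have hmeas : Measurable fun t => μ {s | t ≤ K s} :=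
    Antitone.measurable fun t t' htt' => measure_mono fun s hs => htt'.trans hs
  calc ∫⁻ s, ENNReal.ofReal (K s) ∂ρ
      = (∫⁻ t in Ioc 0 t₀, ρ {s | t ≤ K s}) + ∫⁻ t in Ioi t₀, ρ {s | t ≤ K s} := by
        rw [hlayer, ← Ioc_union_Ioi_eq_Ioi ht₀.le,
          lintegral_union measurableSet_Ioi Ioc_disjoint_Ioi_same]
    _ ≤ (∫⁻ _ in Ioc 0 t₀, ρ univ) + ∫⁻ t in Ioi t₀, ε * μ {s | t ≤ K s} :=
        add_le_add (lintegral_mono fun _ => measure_mono (subset_univ _))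
          (setLIntegral_mono' measurableSet_Ioi hsuper)
    _ ≤ ENNReal.ofReal t₀ * ρ univ + ε * ∫⁻ t in Ioi 0, μ {s | t ≤ K s} := by
        rw [setLIntegral_const, Real.volume_Ioc, sub_zero, mul_comm, lintegral_const_mul _ hmeas]
        gcongr
    _ = _ := by rw [← hlayer, add_comm]

lemma integral_mul_halfPlanePoissonKernel_le (μ : Measure ℝ) [IsFiniteMeasure μ] {g : ℝ → ℝ}
    (hg : Integrable g μ) (hg0 : 0 ≤ᵐ[μ] g) {x y r₀ ε : ℝ} (hy : 0 < y) (hr₀ : 0 ≤ r₀)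
    (hε : 0 ≤ ε)
    (H : ∀ r ∈ Icc 0 r₀, ∫ s in closedBall x r, g s ∂μ ≤ ε * μ.real (closedBall x r)) :
    ∫ s, g s * halfPlanePoissonKernel x y s ∂μ ≤
      ε * ∫ s, halfPlanePoissonKernel x y s ∂μ + y / (r₀ ^ 2 + y ^ 2) * ∫ s, g s ∂μ := by
  set ρ := μ.withDensity fun s => ENNReal.ofReal (g s)
  have : IsFiniteMeasure ρ := isFiniteMeasure_withDensity_ofReal hg.2
  have hofReal (ν : Measure ℝ) [IsFiniteMeasure ν] :
      ENNReal.ofReal (∫ s, halfPlanePoissonKernel x y s ∂ν) =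
        ∫⁻ s, ENNReal.ofReal (halfPlanePoissonKernel x y s) ∂ν :=
    ofReal_integral_eq_lintegral_ofReal (integrable_halfPlanePoissonKernel ν hy)
      (.of_forall fun s => (halfPlanePoissonKernel_pos hy s).le)
  have hρ (A : Set ℝ) (hA : MeasurableSet A) : ρ A = ENNReal.ofReal (∫ s in A, g s ∂μ) := by
    rw [withDensity_apply _ hA,
      ofReal_integral_eq_lintegral_ofReal hg.integrableOn (ae_restrict_of_ae hg0)]
  have hball : ∀ r ∈ Icc 0 r₀, ρ (closedBall x r) ≤ ENNReal.ofReal ε * μ (closedBall x r) := by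
    intro r hr
    rw [hρ _ measurableSet_closedBall, ← ofReal_measureReal, ← ENNReal.ofReal_mul hε]
    exact ENNReal.ofReal_le_ofReal (H r hr)
  have key := lintegral_halfPlanePoissonKernel_le_of_measure_closedBall_le μ ρ hy hr₀ hball
  have hK0 : 0 ≤ ∫ s, halfPlanePoissonKernel x y s ∂μ :=
    integral_nonneg fun s => (halfPlanePoissonKernel_pos hy s).le
  have hg0' : 0 ≤ ∫ s, g s ∂μ := integral_nonneg_of_ae hg0
  rwa [← hofReal ρ, ← hofReal μ, hρ _ MeasurableSet.univ, Measure.restrict_univ,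
    integral_withDensity_ofReal hg.aemeasurable hg0, ← ENNReal.ofReal_mul hε,
    ← ENNReal.ofReal_mul (by positivity), ← ENNReal.ofReal_add (by positivity) (by positivity),
    ENNReal.ofReal_le_ofReal_iff (by positivity)] at key

lemma inv_le_integral_halfPlanePoissonKernel (μ : Measure ℝ) [IsFiniteMeasure μ] {x y M : ℝ}
    (hy : 0 < y) (hM : 0 < M) (hmass : 2 * y ≤ M * μ.real (closedBall x y)) :
    M⁻¹ ≤ ∫ s, halfPlanePoissonKernel x y s ∂μ :=
  calc M⁻¹ ≤ μ.real (closedBall x y) * (2 * y)⁻¹ := by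
        rwa [← div_eq_mul_inv, le_div_iff₀ (by positivity), inv_mul_le_iff₀ hM]
    _ = ∫ _ in closedBall x y, (2 * y)⁻¹ ∂μ := by rw [setIntegral_const, smul_eq_mul]
    _ ≤ ∫ s in closedBall x y, halfPlanePoissonKernel x y s ∂μ :=
        setIntegral_mono_on (integrableOn_const (measure_ne_top _ _))
          (integrable_halfPlanePoissonKernel μ hy).integrableOn measurableSet_closedBall
          fun s hs => inv_two_mul_le_halfPlanePoissonKernel hy hs
    _ ≤ ∫ s, halfPlanePoissonKernel x y s ∂μ :=
        setIntegral_le_integral (integrable_halfPlanePoissonKernel μ hy)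
          (.of_forall fun s => (halfPlanePoissonKernel_pos hy s).le)

lemma abs_integral_mul_div_integral_sub_le {α : Type*} [MeasurableSpace α] {μ : Measure α}
    {w K : α → ℝ} (hwK : Integrable (fun s => w s * K s) μ) (hK : Integrable K μ)
    (hK0 : 0 ≤ᵐ[μ] K) (hpos : 0 < ∫ s, K s ∂μ) (c : ℝ) :
    |(∫ s, w s * K s ∂μ) / ∫ s, K s ∂μ - c| ≤ (∫ s, |w s - c| * K s ∂μ) / ∫ s, K s ∂μ := by
  have hdiff : (∫ s, w s * K s ∂μ) - c * ∫ s, K s ∂μ = ∫ s, (w s - c) * K s ∂μ := by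
    rw [← integral_const_mul, ← integral_sub hwK (hK.const_mul c)]
    simp only [sub_mul]
  rw [div_sub' hpos.ne', abs_div, abs_of_pos hpos, mul_comm, hdiff]
  gcongr
  refine abs_integral_le_integral_abs.trans_eq (integral_congr_ae (hK0.mono fun s hs => ?_))
  simp only [abs_mul, abs_of_nonneg hs]

lemma abs_integral_mul_halfPlanePoissonKernel_div_sub_le (μ : Measure ℝ) [IsFiniteMeasure μ]
    {w : ℝ → ℝ} (hw : Integrable w μ) {x y r₀ δ M : ℝ} (hy : 0 < y) (hr₀ : 0 < r₀)
    (hδ : 0 ≤ δ) (hM : 0 < M)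
    (H : ∀ r ∈ Icc 0 r₀, ∫ s in closedBall x r, |w s - w x| ∂μ ≤ δ * μ.real (closedBall x r))
    (hmass : 2 * y ≤ M * μ.real (closedBall x y)) :
    |(∫ s, w s * halfPlanePoissonKernel x y s ∂μ) / ∫ s, halfPlanePoissonKernel x y s ∂μ - w x|
      ≤ δ + y / r₀ ^ 2 * (∫ s, |w s - w x| ∂μ) * M := by
  set D := ∫ s, halfPlanePoissonKernel x y s ∂μ
  have hD : M⁻¹ ≤ D := inv_le_integral_halfPlanePoissonKernel μ hy hM hmass
  have hDpos : 0 < D := (inv_pos.2 hM).trans_le hD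
  calc _ ≤ (∫ s, |w s - w x| * halfPlanePoissonKernel x y s ∂μ) / D :=
        abs_integral_mul_div_integral_sub_le (hw.mul_halfPlanePoissonKernel hy)
          (integrable_halfPlanePoissonKernel μ hy)
          (.of_forall fun s => (halfPlanePoissonKernel_pos hy s).le) hDpos (w x)
    _ ≤ (δ * D + y / (r₀ ^ 2 + y ^ 2) * ∫ s, |w s - w x| ∂μ) / D := by
        gcongr
        exact integral_mul_halfPlanePoissonKernel_le μ (hw.sub (integrable_const _)).abs
          (.of_forall fun _ => abs_nonneg _) hy hr₀.le hδ H
    _ = δ + y / (r₀ ^ 2 + y ^ 2) * (∫ s, |w s - w x| ∂μ) * D⁻¹ := by field_simp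
    _ ≤ δ + y / r₀ ^ 2 * (∫ s, |w s - w x| ∂μ) * M := by
        gcongr
        · exact le_add_of_nonneg_right (sq_nonneg y)
        · exact inv_le_of_inv_le₀ hM hD

lemma exists_setIntegral_abs_sub_le_of_tendsto (μ : Measure ℝ) [IsFiniteMeasure μ]
    {w : ℝ → ℝ} {x δ : ℝ} (hδ : 0 < δ)
    (hleb : Tendsto (fun r => ⨍ s in closedBall x r, |w s - w x| ∂μ) (𝓝[>] 0) (𝓝 0)) :
    ∃ r₀ > 0, ∀ r ∈ Icc 0 r₀,
      ∫ s in closedBall x r, |w s - w x| ∂μ ≤ δ * μ.real (closedBall x r) := by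
  obtain ⟨r₀, hr₀, hsub⟩ := mem_nhdsGT_iff_exists_Ioc_subset.1 (hleb.eventually_lt_const hδ)
  refine ⟨r₀, hr₀, fun r hr => ?_⟩
  rcases hr.1.eq_or_lt with rfl | hr0
  · simpa using mul_nonneg hδ.le measureReal_nonneg
  rw [← measure_smul_setAverage _ (measure_ne_top _ _), smul_eq_mul, mul_comm]
  exact mul_le_mul_of_nonneg_right (hsub ⟨hr0, hr.2⟩).le measureReal_nonneg

lemma tendsto_integral_mul_halfPlanePoissonKernel_div (μ : Measure ℝ) [IsFiniteMeasure μ]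
    {w : ℝ → ℝ} (hw : Integrable w μ) {x M : ℝ} (hM : 0 < M)
    (hleb : Tendsto (fun r => ⨍ s in closedBall x r, |w s - w x| ∂μ) (𝓝[>] 0) (𝓝 0))
    (hmass : ∀ᶠ r in 𝓝[>] 0, 2 * r ≤ M * μ.real (closedBall x r)) :
    Tendsto (fun y => (∫ s, w s * halfPlanePoissonKernel x y s ∂μ) /
      ∫ s, halfPlanePoissonKernel x y s ∂μ) (𝓝[>] 0) (𝓝 (w x)) := by
  rw [Metric.tendsto_nhds]
  intro ε hε
  obtain ⟨r₀, hr₀, H⟩ := exists_setIntegral_abs_sub_le_of_tendsto μ (half_pos hε) hleb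
  set C := ∫ s, |w s - w x| ∂μ
  have hsmall : ∀ᶠ y in 𝓝[>] 0, y / r₀ ^ 2 * C * M < ε / 2 := by
    have : Tendsto (fun y : ℝ => y / r₀ ^ 2 * C * M) (𝓝[>] 0) (𝓝 0) := by
      refine tendsto_nhdsWithin_of_tendsto_nhds ?_
      simpa using ((continuous_id.div_const (r₀ ^ 2)).mul_const C |>.mul_const M).tendsto 0
    exact this.eventually_lt_const (half_pos hε)
  filter_upwards [self_mem_nhdsWithin, hmass, hsmall] with y hy hyM hyC
  rw [Real.dist_eq]
  linarith [abs_integral_mul_halfPlanePoissonKernel_div_sub_le μ hw hy hr₀ (half_pos hε).le hM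
    H hyM]

lemma ae_tendsto_setAverage_abs_sub {β : Type*} [MetricSpace β] [MeasurableSpace β]
    [BorelSpace β] [SecondCountableTopology β] [HasBesicovitchCovering β] (μ : Measure β)
    [IsLocallyFiniteMeasure μ] {f : β → ℝ} (hf : LocallyIntegrable f μ) :
    ∀ᵐ x ∂μ, Tendsto (fun r => ⨍ s in closedBall x r, |f s - f x| ∂μ) (𝓝[>] 0) (𝓝 0) := by
  filter_upwards [(Besicovitch.vitaliFamily μ).ae_tendsto_average_norm_sub hf] with x hx
  simpa only [Real.norm_eq_abs, Function.comp_def] using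
    hx.comp (Besicovitch.tendsto_filterAt μ x)

/-- The density of Lebesgue measure with respect to `μ` is finite `μ`-a.e. -/
lemma ae_exists_two_mul_le_mul_measureReal_closedBall (μ : Measure ℝ)
    [IsLocallyFiniteMeasure μ] :
    ∀ᵐ x ∂μ, ∃ M > 0, ∀ᶠ r in 𝓝[>] 0, 2 * r ≤ M * μ.real (closedBall x r) := by
  filter_upwards [Besicovitch.ae_tendsto_rnDeriv volume μ, Measure.rnDeriv_lt_top volume μ]
    with x hlim hfin
  have hL : volume.rnDeriv μ x + 1 ≠ ⊤ := ENNReal.add_ne_top.2 ⟨hfin.ne, ENNReal.one_ne_top⟩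
  refine ⟨(volume.rnDeriv μ x + 1).toReal, ENNReal.toReal_pos (by simp) hL, ?_⟩
  filter_upwards [hlim.eventually_lt_const (ENNReal.lt_add_right hfin.ne one_ne_zero),
    self_mem_nhdsWithin] with r hr (hr0 : 0 < r)
  rw [← Real.volume_real_closedBall (a := x) hr0.le, measureReal_def, measureReal_def,
    ← ENNReal.toReal_mul]
  exact ENNReal.toReal_mono (ENNReal.mul_ne_top hL measure_closedBall_lt_top.ne)
    ((ENNReal.div_le_iff_le_mul (Or.inr hL) (Or.inr (by simp))).1 hr.le)

lemma poissonExt_withDensity_div_poissonExt (μ : Measure ℝ) {w : ℝ → ℝ}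
    (hw : AEMeasurable w μ) (hw0 : 0 ≤ᵐ[μ] w) (x y : ℝ) :
    poissonExt (μ.withDensity fun s => ENNReal.ofReal (w s)) x y / poissonExt μ x y =
      (∫ s, w s * halfPlanePoissonKernel x y s ∂μ) / ∫ s, halfPlanePoissonKernel x y s ∂μ := by
  rw [poissonExt, poissonExt, integral_withDensity_ofReal hw hw0,
    mul_div_mul_left _ _ (by positivity)]
  rfl

theorem ae_tendsto_poissonExt_div_poissonExt (μ ν : Measure ℝ) [IsFiniteMeasure μ]
    {w : ℝ → ℝ} (hw_int : Integrable w μ) (hw_nonneg : 0 ≤ᵐ[μ] w)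
    (hν : ν = μ.withDensity fun x => ENNReal.ofReal (w x)) :
    ∀ᵐ x ∂μ, Tendsto (fun y => poissonExt ν x y / poissonExt μ x y) (𝓝[>] 0) (𝓝 (w x)) := by
  filter_upwards [ae_tendsto_setAverage_abs_sub μ hw_int.locallyIntegrable,
    ae_exists_two_mul_le_mul_measureReal_closedBall μ] with x hleb ⟨M, hM, hmass⟩
  subst hν
  simpa only [poissonExt_withDensity_div_poissonExt μ hw_int.aemeasurable hw_nonneg x] using
    tendsto_integral_mul_halfPlanePoissonKernel_div μ hw_int hM hleb hmass

theorem stmt8_general (μ ν : Measure ℝ) [IsFiniteMeasure μ]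
    (w : ℝ → ℝ) (hw_int : Integrable w μ) (hw_nonneg : 0 ≤ᵐ[μ] w)
    (hν : ν = μ.withDensity (fun x => ENNReal.ofReal (w x))) :
    ∀ᵐ x ∂μ,
      Tendsto (fun n : ℕ =>
          poissonExt ν x (((2 : ℝ) ^ n)⁻¹) / poissonExt μ x (((2 : ℝ) ^ n)⁻¹))
        atTop (nhds (w x)) := by
  have hdyadic : Tendsto (fun n : ℕ => ((2 : ℝ) ^ n)⁻¹) atTop (𝓝[>] 0) :=
    tendsto_nhdsWithin_iff.2
      ⟨tendsto_inv_atTop_zero.comp (tendsto_pow_atTop_atTop_of_one_lt one_lt_two),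
        .of_forall fun n => mem_Ioi.2 (by positivity)⟩
  filter_upwards [ae_tendsto_poissonExt_div_poissonExt μ ν hw_int hw_nonneg hν] with x hx
  exact hx.comp hdyadic

/-- If `dν = w dμ` with `w ∈ L¹(μ)`, then the ratio of the Poisson extensions of `ν`
and `μ` along the points `x + i 2⁻ⁿ` converges to `w(x)` for `μ`-a.e. `x`. -/
theorem stmt8 (μ ν : Measure ℝ) [IsFiniteMeasure μ] [IsFiniteMeasure ν]
    (w : ℝ → ℝ) (hw_int : Integrable w μ) (hw_nonneg : 0 ≤ᵐ[μ] w)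
    (hν : ν = μ.withDensity (fun x => ENNReal.ofReal (w x))) :
    ∀ᵐ x ∂μ,
      Tendsto (fun n : ℕ =>
          poissonExt ν x (((2 : ℝ) ^ n)⁻¹) / poissonExt μ x (((2 : ℝ) ^ n)⁻¹))
        atTop (nhds (w x)) :=
  stmt8_general μ ν w hw_int hw_nonneg hν
end
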